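/- Let G be a finite group. Then K(G) equals the intersection of all maximal cyclic subgroups of G. -/

import Mathlib

/-- `K(G)`: the set of elements `x` such that `⟨x, g⟩` is cyclic for all `g ∈ G`
(the universal vertices of the enhanced power graph together with the identity). -/
def KSet (G : Type*) [Group G] : Set G :=
  {x | ∀ g : G, IsCyclic (Subgroup.closure ({x, g} : Set G))}

/-- A group is generalized quaternion if it is isomorphic to `Q_{2^n}` for some `n ≥ 3`. -/
def IsGeneralizedQuaternion (Q : Type*) [Group Q] : Prop :=
  ∃ n : ℕ, 3 ≤ n ∧ Nonempty (Q ≃* QuaternionGroup (2 ^ (n - 2)))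

/-- The enhanced power graph of `G`: vertices are nonidentity elements, with an edge
between distinct `x` and `y` iff `⟨x, y⟩` is cyclic. -/
def enhancedPowerGraph (G : Type*) [Group G] : SimpleGraph {g : G // g ≠ 1} where
  Adj x y := x ≠ y ∧ IsCyclic (Subgroup.closure ({x.1, y.1} : Set G))
  symm := ⟨by
    intro x y
    rintro ⟨hne, hc⟩
    exact ⟨hne.symm, by rwa [Set.pair_comm]⟩⟩
  loopless := ⟨by intro x; simp⟩

/-- `K(G)` equals the intersection of all maximal cyclic subgroups of `G`. -/
theorem KSet_eq_iInter_maximal_cyclic (G : Type*) [Group G] [Finite G] :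
    KSet G = ⋂ M ∈ {M : Subgroup G | IsCyclic M ∧
      ∀ C : Subgroup G, IsCyclic C → M ≤ C → M = C}, (M : Set G) := by
  ext x
  simp only [KSet, Set.mem_iInter, Set.mem_setOf_eq, SetLike.mem_coe]
  constructor
  · rintro hx M ⟨hMc, hMmax⟩
    obtain ⟨m, hm⟩ := hMc.exists_generator
    have hc := hx (m : G)
    have hle : M ≤ Subgroup.closure ({x, (m : G)} : Set G) := by
      intro y hy
      obtain ⟨k, hk⟩ := hm ⟨y, hy⟩
      have h2 : ((m : G)) ^ k = y := by
        have := congrArg Subtype.val hk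
        simpa using this
      rw [← h2]
      exact zpow_mem (Subgroup.subset_closure (by simp)) k
    have := hMmax _ hc hle
    rw [this]
    exact Subgroup.subset_closure (by simp)
  · intro hx g
    set s : Set (Subgroup G) := {C | IsCyclic C ∧ Subgroup.zpowers g ≤ C} with hs
    obtain ⟨M, ⟨hMc, hMg⟩, hMmax⟩ := Set.Finite.exists_maximalFor id s (Set.toFinite s)
      ⟨Subgroup.zpowers g, ⟨⟨⟨⟨g, Subgroup.mem_zpowers g⟩, fun x => by
        obtain ⟨k, hk⟩ := Subgroup.mem_zpowers_iff.mp x.2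
        exact ⟨k, Subtype.ext (by simpa using hk)⟩⟩⟩, le_rfl⟩⟩
    have hMmax' : ∀ C : Subgroup G, IsCyclic C → M ≤ C → M = C := by
      intro C hC hle
      exact le_antisymm hle (hMmax (j := C) ⟨hC, hMg.trans hle⟩ hle)
    have hxM : x ∈ M := hx M ⟨hMc, hMmax'⟩
    have hle : Subgroup.closure ({x, g} : Set G) ≤ M := by
      apply Subgroup.closure_le _ |>.2
      intro y hy
      rcases hy with rfl | hy
      · exact hxM
      · rw [Set.mem_singleton_iff] at hy
        rw [hy]
        exact hMg (Subgroup.mem_zpowers g)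
    exact isCyclic_of_surjective _ (Subgroup.subgroupOfEquivOfLe hle).surjective
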